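/- arXiv:1007.5246 — 2 statements merged into one kernel-verified Lean document; each statement's English description precedes it below -/
import Mathlib

section
/- (Rado's theorem) Let a ∈ ℝⁿ and let V_a denote the convex hull of the set {(a_{π(1)}, …, a_{π(n)}) : π ∈ S_n} of all coordinate permutations of a. Then a point x ∈ ℝⁿ belongs to V_a if and only if x is majorized by a, i.e. for every l ∈ {1, …, n} the sum of the l largest components of x is at most the sum of the l largest components of a, with equality when l = n. -/
open Finset

/-!
Permutations of `a` are majorized by `a`, and majorization by `a` is a convex condition because
each `sumLargest · l` is a maximum of linear functionals; so the hull lies inside. Conversely, a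
point `x ≺ a` outside the hull would be strictly separated from it by some weights `c`. Pair the
`k`-th largest weight with the `k`-th largest entry of `a`: summing by parts against the
decreasing weights, `∑ x i * c i` is controlled by partial sums of `x` along the order of `c`,
each at most a `sumLargest x k ≤ sumLargest a k`, which is the matching partial sum of the
sorted `a`. So that permutation of `a` is not separated from `x`.
-/

/-- The sum of the `l` largest components of `x : Fin n → ℝ`, defined as the
supremum of sums over index sets of cardinality `l`. -/
noncomputable def sumLargest {n : ℕ} (x : Fin n → ℝ) (l : ℕ) : ℝ :=
  sSup ((fun A : Finset (Fin n) => ∑ i ∈ A, x i) '' {A | A.card = l})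

/-- `x` is majorized by `a`: for every `1 ≤ l ≤ n` the sum of the `l` largest
components of `x` is at most that of `a`, with equality for `l = n`. -/
def Majorizes {n : ℕ} (x a : Fin n → ℝ) : Prop :=
  (∀ l, 1 ≤ l → l ≤ n → sumLargest x l ≤ sumLargest a l) ∧
    sumLargest x n = sumLargest a n

section ExchangeAndAbel

variable {ι M R : Type*}

theorem Finset.sum_le_sum_of_card_eq_of_forall_le [AddCommMonoid M] [LinearOrder M]
    [IsOrderedAddMonoid M] {f : ι → M} {s t : Finset ι} (hst : #s = #t)
    (h : ∀ i ∈ s, ∀ j ∈ t, f i ≤ f j) : ∑ i ∈ s, f i ≤ ∑ j ∈ t, f j := by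
  rcases s.eq_empty_or_nonempty with rfl | hs
  · rw [card_empty, eq_comm, card_eq_zero] at hst
    simp [hst]
  calc ∑ i ∈ s, f i ≤ #s • s.sup' hs f := sum_le_card_nsmul _ _ _ fun i hi => le_sup' f hi
    _ = #t • s.sup' hs f := by rw [hst]
    _ ≤ ∑ j ∈ t, f j :=
      card_nsmul_le_sum _ _ _ fun j hj => sup'_le hs f fun i hi => h i hi j hj

theorem Finset.sum_le_sum_of_card_eq_of_forall_notMem_le [DecidableEq ι] [AddCommMonoid M]
    [LinearOrder M] [IsOrderedAddMonoid M] {f : ι → M} {s t : Finset ι} (hst : #s = #t)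
    (ht : ∀ i ∈ t, ∀ j ∉ t, f j ≤ f i) : ∑ i ∈ s, f i ≤ ∑ i ∈ t, f i := by
  have hdiff : ∑ i ∈ s \ t, f i ≤ ∑ i ∈ t \ s, f i :=
    sum_le_sum_of_card_eq_of_forall_le (card_sdiff_comm hst) fun i hi j hj =>
      ht j (mem_sdiff.1 hj).1 i (mem_sdiff.1 hi).2
  rw [← sum_inter_add_sum_sdiff s t, ← sum_inter_add_sum_sdiff t s, inter_comm]
  gcongr

/-- Summation by parts, in the form proved by induction on `n`: the lower bound `t` of `d`
replaces the last weight `d (last n)`, which does not exist for `n = 0`. -/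
theorem Fin.sum_mul_le_sum_mul_of_sum_Iic_nonpos [Ring R] [LinearOrder R] [IsOrderedRing R] :
    ∀ {n : ℕ} {w d : Fin n → R}, Antitone d → (∀ k, ∑ i ∈ Iic k, w i ≤ 0) →
      ∀ {t : R}, (∀ i, t ≤ d i) → ∑ i, w i * d i ≤ (∑ i, w i) * t
  | 0, _, _, _, _, _, _ => by simp
  | n + 1, w, d, hd, hw, t, ht => by
    have hw' (k : Fin n) : ∑ i ∈ Iic k, w i.castSucc ≤ 0 := by
      simpa [← finsetImage_castSucc_Iic, sum_image (castSucc_injective n).injOn] using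
        hw k.castSucc
    have ih := sum_mul_le_sum_mul_of_sum_Iic_nonpos (hd.comp_monotone strictMono_castSucc.monotone)
      hw' fun i => hd (le_last i.castSucc)
    have htotal : ∑ i, w i ≤ 0 := by simpa [← top_eq_last] using hw (last n)
    calc ∑ i, w i * d i
        = ∑ i : Fin n, w i.castSucc * d i.castSucc + w (last n) * d (last n) :=
          sum_univ_castSucc _
      _ ≤ (∑ i : Fin n, w i.castSucc) * d (last n) + w (last n) * d (last n) := by
          gcongr; exact ih
      _ = (∑ i, w i) * d (last n) := by rw [sum_univ_castSucc, add_mul]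
      _ ≤ (∑ i, w i) * t := mul_le_mul_of_nonpos_left (ht _) htotal

theorem Fin.sum_mul_le_sum_mul_of_sum_Iic_le [Ring R] [LinearOrder R] [IsOrderedRing R]
    {n : ℕ} {y z d : Fin n → R} (hd : Antitone d)
    (hyz : ∀ k, ∑ i ∈ Iic k, y i ≤ ∑ i ∈ Iic k, z i) (hsum : ∑ i, y i = ∑ i, z i) :
    ∑ i, y i * d i ≤ ∑ i, z i * d i := by
  obtain ⟨t, ht⟩ := (Set.finite_range d).bddBelow
  have := sum_mul_le_sum_mul_of_sum_Iic_nonpos (w := y - z) hd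
    (fun k => by simpa [sum_sub_distrib] using hyz k) fun i => ht ⟨i, rfl⟩
  simpa [sub_mul, sum_sub_distrib, hsum] using this

theorem Tuple.exists_perm_antitone_comp {n : ℕ} [LinearOrder M] (f : Fin n → M) :
    ∃ σ : Equiv.Perm (Fin n), Antitone (f ∘ σ) :=
  ⟨sort (OrderDual.toDual ∘ f), monotone_sort (OrderDual.toDual ∘ f)⟩

end ExchangeAndAbel

section SumLargest

variable {n : ℕ}

theorem sum_le_sumLargest (x : Fin n → ℝ) {A : Finset (Fin n)} {l : ℕ} (hA : #A = l) :
    ∑ i ∈ A, x i ≤ sumLargest x l :=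
  le_csSup ((Set.toFinite _).image _).bddAbove ⟨A, hA, rfl⟩

theorem sumLargest_le (x : Fin n → ℝ) {l : ℕ} (hl : l ≤ n) {r : ℝ}
    (h : ∀ A : Finset (Fin n), #A = l → ∑ i ∈ A, x i ≤ r) : sumLargest x l ≤ r := by
  obtain ⟨A, -, hA⟩ := exists_subset_card_eq (s := (univ : Finset (Fin n))) (by simpa using hl)
  refine csSup_le ⟨_, A, hA, rfl⟩ ?_
  rintro _ ⟨B, hB, rfl⟩
  exact h B hB

theorem sumLargest_card_eq_sum {x : Fin n → ℝ} {B : Finset (Fin n)}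
    (hB : ∀ i ∈ B, ∀ j ∉ B, x j ≤ x i) : sumLargest x #B = ∑ i ∈ B, x i :=
  (sumLargest_le x (by simpa using B.card_le_univ) fun _ hA =>
    sum_le_sum_of_card_eq_of_forall_notMem_le hA hB).antisymm (sum_le_sumLargest x rfl)

theorem sumLargest_eq_sum (x : Fin n → ℝ) : sumLargest x n = ∑ i, x i := by
  simpa using sumLargest_card_eq_sum (x := x) (B := univ) (by simp)

theorem sumLargest_succ_eq_sum_Iic {x : Fin n → ℝ} {σ : Equiv.Perm (Fin n)}
    (hσ : Antitone (x ∘ σ)) (k : Fin n) : sumLargest x (k + 1) = ∑ i ∈ Iic k, x (σ i) := by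
  have hB : ∀ i ∈ (Iic k).map σ.toEmbedding, ∀ j ∉ (Iic k).map σ.toEmbedding, x j ≤ x i := by
    intro i hi j hj
    obtain ⟨p, hp, rfl⟩ := mem_map.1 hi
    have hjk : k < σ.symm j := not_le.1 fun h => hj (mem_map.2 ⟨σ.symm j, mem_Iic.2 h, by simp⟩)
    simpa using hσ ((mem_Iic.1 hp).trans hjk.le)
  simpa using sumLargest_card_eq_sum hB

theorem sumLargest_comp_perm (x : Fin n → ℝ) (σ : Equiv.Perm (Fin n)) {l : ℕ} (hl : l ≤ n) :
    sumLargest (x ∘ σ) l = sumLargest x l := by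
  have hle (y : Fin n → ℝ) (τ : Equiv.Perm (Fin n)) : sumLargest (y ∘ τ) l ≤ sumLargest y l :=
    sumLargest_le _ hl fun A hA =>
      (sum_map A τ.toEmbedding y).symm.trans_le (sum_le_sumLargest y (by simpa using hA))
  exact (hle x σ).antisymm (by simpa [Function.comp_assoc] using hle (x ∘ σ) σ.symm)

theorem convexOn_sumLargest {l : ℕ} (hl : l ≤ n) :
    ConvexOn ℝ Set.univ fun x : Fin n → ℝ => sumLargest x l := by
  refine ⟨convex_univ, fun x _ y _ a b ha hb _ => sumLargest_le _ hl fun A hA => ?_⟩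
  calc ∑ i ∈ A, (a • x + b • y) i = a * ∑ i ∈ A, x i + b * ∑ i ∈ A, y i := by
        simp [sum_add_distrib, mul_sum]
    _ ≤ a • sumLargest x l + b • sumLargest y l := by
        rw [smul_eq_mul, smul_eq_mul]
        gcongr <;> exact sum_le_sumLargest _ hA

end SumLargest

theorem mem_convexHull_of_forall_exists_le {E : Type*} [AddCommGroup E] [Module ℝ E]
    [TopologicalSpace E] [T2Space E] [IsTopologicalAddGroup E] [ContinuousSMul ℝ E]
    [LocallyConvexSpace ℝ E] {s : Set E} (hs : s.Finite) {x : E}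
    (h : ∀ f : StrongDual ℝ E, ∃ y ∈ s, f x ≤ f y) : x ∈ convexHull ℝ s := by
  by_contra hx
  obtain ⟨f, u, hfs, hfx⟩ := geometric_hahn_banach_closed_point (convex_convexHull ℝ s)
    (hs.isCompact_convexHull ℝ).isClosed hx
  obtain ⟨y, hy, hxy⟩ := h f
  exact (hfs y (subset_convexHull ℝ s hy)).not_ge (hfx.le.trans hxy)

section Majorizes

variable {n : ℕ}

theorem majorizes_comp_perm (a : Fin n → ℝ) (σ : Equiv.Perm (Fin n)) : Majorizes (a ∘ σ) a :=
  ⟨fun _ _ hl => (sumLargest_comp_perm a σ hl).le, sumLargest_comp_perm a σ le_rfl⟩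

theorem convex_setOf_majorizes (a : Fin n → ℝ) : Convex ℝ {x | Majorizes x a} := by
  have hle {l : ℕ} (hl : l ≤ n) : Convex ℝ {x : Fin n → ℝ | sumLargest x l ≤ sumLargest a l} := by
    simpa using (convexOn_sumLargest hl).convex_le (sumLargest a l)
  have hsum : IsLinearMap ℝ fun x : Fin n → ℝ => ∑ i, x i :=
    ⟨fun _ _ => sum_add_distrib, fun _ _ => (mul_sum _ _ _).symm⟩
  have hset : {x | Majorizes x a} = (⋂ (l) (_ : 1 ≤ l) (_ : l ≤ n),
      {x | sumLargest x l ≤ sumLargest a l}) ∩ {x | ∑ i, x i = sumLargest a n} := by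
    ext x
    simp [Majorizes, sumLargest_eq_sum x]
  rw [hset]
  exact Convex.inter (convex_iInter fun _ => convex_iInter fun _ => convex_iInter hle)
    (convex_hyperplane hsum _)

theorem Majorizes.exists_perm_sum_mul_le {x a : Fin n → ℝ} (h : Majorizes x a)
    (c : Fin n → ℝ) : ∃ π : Equiv.Perm (Fin n), ∑ i, x i * c i ≤ ∑ i, a (π i) * c i := by
  obtain ⟨σ, hσ⟩ := Tuple.exists_perm_antitone_comp c
  obtain ⟨τ, hτ⟩ := Tuple.exists_perm_antitone_comp a
  have hprefix (k : Fin n) : ∑ i ∈ Iic k, x (σ i) ≤ ∑ i ∈ Iic k, a (τ i) :=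
    calc ∑ i ∈ Iic k, x (σ i) = ∑ i ∈ (Iic k).map σ.toEmbedding, x i :=
        (sum_map (Iic k) σ.toEmbedding x).symm
      _ ≤ sumLargest x (k + 1) := sum_le_sumLargest x (by simp)
      _ ≤ sumLargest a (k + 1) := h.1 _ (by omega) k.isLt
      _ = ∑ i ∈ Iic k, a (τ i) := sumLargest_succ_eq_sum_Iic hτ k
  have htotal : ∑ i, x (σ i) = ∑ i, a (τ i) := by
    rw [Equiv.sum_comp σ x, Equiv.sum_comp τ a, ← sumLargest_eq_sum, ← sumLargest_eq_sum, h.2]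
  refine ⟨σ.symm.trans τ, ?_⟩
  calc ∑ i, x i * c i = ∑ i, x (σ i) * c (σ i) := (Equiv.sum_comp σ _).symm
    _ ≤ ∑ i, a (τ i) * c (σ i) := Fin.sum_mul_le_sum_mul_of_sum_Iic_le hσ hprefix htotal
    _ = ∑ i, a ((σ.symm.trans τ) i) * c i := by
      rw [← Equiv.sum_comp σ fun i => a ((σ.symm.trans τ) i) * c i]
      simp only [Equiv.trans_apply, Equiv.symm_apply_apply]

end Majorizes

/-- Rado's theorem: `x` lies in the convex hull of the coordinate permutations of `a`
if and only if `x` is majorized by `a`. -/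
theorem rado_theorem (n : ℕ) (a x : Fin n → ℝ) :
    x ∈ convexHull ℝ {y : Fin n → ℝ | ∃ π : Equiv.Perm (Fin n), y = fun i => a (π i)} ↔
      Majorizes x a := by
  constructor
  · refine fun hx => convexHull_min ?_ (convex_setOf_majorizes a) hx
    rintro _ ⟨σ, rfl⟩
    exact majorizes_comp_perm a σ
  · intro h
    have hfin : {y : Fin n → ℝ | ∃ π : Equiv.Perm (Fin n), y = fun i => a (π i)}.Finite :=
      (Set.finite_range fun π : Equiv.Perm (Fin n) => a ∘ π).subset
        fun _ ⟨π, hπ⟩ => ⟨π, hπ.symm⟩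
    refine mem_convexHull_of_forall_exists_le hfin fun f => ?_
    obtain ⟨π, hπ⟩ := h.exists_perm_sum_mul_le fun i => f fun j => if i = j then 1 else 0
    have hf (y : Fin n → ℝ) : f y = ∑ i, y i * f fun j => if i = j then 1 else 0 := by
      simpa only [ContinuousLinearMap.coe_coe, smul_eq_mul] using
        f.toLinearMap.pi_apply_eq_sum_univ y
    exact ⟨_, ⟨π, rfl⟩, by rw [hf, hf]; exact hπ⟩
end

section
/- Let a, b ∈ ℝⁿ and let V_a, V_b denote the convex hulls of the sets of all coordinate permutations of a and b respectively. Then V_a ∩ V_b = ∅ if and only if Σ_{k=1}^n a_k ≠ Σ_{k=1}^n b_k. -/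
open Finset

/-- The permutahedron of `a`: the convex hull of all coordinate permutations of `a`. -/
def permutahedron {n : ℕ} (a : Fin n → ℝ) : Set (Fin n → ℝ) :=
  convexHull ℝ {y : Fin n → ℝ | ∃ π : Equiv.Perm (Fin n), y = fun i => a (π i)}

/-!
The coordinate sum is a linear functional, so it is constant, equal to `∑ i, a i`, on the
permutahedron of `a`; this gives disjointness when the sums differ. Conversely, averaging
all permutations of `a` gives a point invariant under permuting coordinates, hence the
constant vector with entries `(∑ i, a i) / n`; it lies in both permutahedra when the sums agree.
-/

section CoordinateSum

variable {ι 𝕜 : Type*} [Fintype ι] [Field 𝕜] [LinearOrder 𝕜] [IsStrictOrderedRing 𝕜]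

lemma convex_setOf_sum_eq (c : 𝕜) : Convex 𝕜 {x : ι → 𝕜 | ∑ i, x i = c} :=
  convex_hyperplane ⟨fun _ _ => sum_add_distrib, fun _ _ => (mul_sum _ _ _).symm⟩ c

lemma sum_eq_of_mem_convexHull {s : Set (ι → 𝕜)} {c : 𝕜} (hs : ∀ y ∈ s, ∑ i, y i = c)
    {x : ι → 𝕜} (hx : x ∈ convexHull 𝕜 s) : ∑ i, x i = c :=
  convexHull_min hs (convex_setOf_sum_eq c) hx

end CoordinateSum

section SumOverPerm

variable {ι M : Type*} [Fintype ι] [DecidableEq ι] [AddCommMonoid M]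

lemma sum_perm_apply_eq (a : ι → M) (j j' : ι) :
    ∑ π : Equiv.Perm ι, a (π j) = ∑ π : Equiv.Perm ι, a (π j') :=
  Fintype.sum_equiv (Equiv.mulRight (Equiv.swap j' j)) _ _ fun π => by simp

lemma card_smul_sum_perm_apply (a : ι → M) (j : ι) :
    Fintype.card ι • ∑ π : Equiv.Perm ι, a (π j) = Fintype.card (Equiv.Perm ι) • ∑ i, a i :=
  calc Fintype.card ι • ∑ π : Equiv.Perm ι, a (π j)
      = ∑ j' : ι, ∑ π : Equiv.Perm ι, a (π j') := by
        rw [← card_univ, ← sum_const]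
        exact sum_congr rfl fun j' _ => sum_perm_apply_eq a j j'
    _ = ∑ π : Equiv.Perm ι, ∑ i, a i := by
        rw [sum_comm]
        exact sum_congr rfl fun π _ => Equiv.sum_comp π a
    _ = Fintype.card (Equiv.Perm ι) • ∑ i, a i := by rw [sum_const, card_univ]

end SumOverPerm

lemma sum_eq_of_mem_permutahedron {n : ℕ} (a : Fin n → ℝ) {x : Fin n → ℝ}
    (hx : x ∈ permutahedron a) : ∑ i, x i = ∑ i, a i :=
  sum_eq_of_mem_convexHull (by rintro y ⟨π, rfl⟩; exact Equiv.sum_comp π a) hx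

lemma const_sum_div_mem_permutahedron {n : ℕ} (a : Fin n → ℝ) :
    (fun _ => (∑ i, a i) / n) ∈ permutahedron a := by
  have hmem : univ.centerMass (fun _ => (1 : ℝ)) (fun (π : Equiv.Perm (Fin n)) i => a (π i))
      ∈ permutahedron a :=
    centerMass_mem_convexHull _ (fun _ _ => zero_le_one)
      (by simpa using Fintype.card_pos) fun π _ => ⟨π, rfl⟩
  convert hmem using 1
  funext j
  have hn : (n : ℝ) ≠ 0 := by exact_mod_cast (Fin.pos j).ne'
  have hcard := card_smul_sum_perm_apply a j
  simp only [Fintype.card_fin, nsmul_eq_mul] at hcard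
  simp only [centerMass, sum_const, card_univ, nsmul_eq_mul, mul_one, one_smul,
    Pi.smul_apply, Finset.sum_apply, smul_eq_mul]
  field_simp
  linarith

/-- The permutahedra of `a` and `b` are disjoint if and only if the coordinate sums
of `a` and `b` differ. -/
theorem permutahedron_disjoint_iff_sum_ne (n : ℕ) (a b : Fin n → ℝ) :
    permutahedron a ∩ permutahedron b = ∅ ↔ (∑ i, a i) ≠ ∑ i, b i := by
  rw [Set.eq_empty_iff_forall_notMem]
  constructor
  · intro hdisj hsum
    have ha := const_sum_div_mem_permutahedron a
    rw [hsum] at ha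
    exact hdisj _ ⟨ha, const_sum_div_mem_permutahedron b⟩
  · rintro hsum x ⟨hxa, hxb⟩
    exact hsum ((sum_eq_of_mem_permutahedron a hxa).symm.trans (sum_eq_of_mem_permutahedron b hxb))
end
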